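/- arXiv:2405.09490 — 3 statements merged into one kernel-verified Lean document; each statement's English description precedes it below -/
import Mathlib

section
/- Let H be a real Hilbert space, P : H → H a linear isometry with P² = I, K ⊆ H a nonempty closed convex cone satisfying P(K) ⊆ K, and let K° be the polar cone of K. Define M = {λ ∈ K° : λ = Pλ}. Then for every y ∈ H, the metric projection of y onto M is given by P_M y = (1/2) · P_{K°}((I + P) y). -/
open scoped RealInnerProductSpace

/-!
Write `w = y + P y` and `q = P_{K°} w`. Since `P` is an isometry that preserves `K°` and fixes `w`,
`P q` is also a nearest point of `w` in `K°`, so `P q = q` by uniqueness. As `K°` is a cone,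
`q / 2` is the nearest point of `w / 2` in `K°`; it lies in `M ⊆ K°`, so it is also the nearest
point of `w / 2` in `M`. Finally `y - w / 2 = (y - P y) / 2` is orthogonal to the fixed space of
`P`, which contains `M`, so by Pythagoras `y` and `w / 2` have the same nearest point in `M`.
-/

section NormedNearestPoint

variable {E : Type*} [SeminormedAddCommGroup E] {S : Set E} {x v : E}

theorem IsMinOn.norm_sub_apply {T : E → E} (hT : Isometry T) (hx : T x = x)
    (h : IsMinOn (fun z => ‖x - z‖) S v) : IsMinOn (fun z => ‖x - z‖) S (T v) := by
  refine isMinOn_iff.2 fun z hz => ?_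
  rw [← dist_eq_norm, ← hx, hT.dist_eq, hx, dist_eq_norm]
  exact isMinOn_iff.1 h z hz

theorem IsMinOn.norm_sub_smul [NormedSpace ℝ E] {c : ℝ} (hc : 0 < c) (hS : ∀ z ∈ S, c⁻¹ • z ∈ S)
    (h : IsMinOn (fun z => ‖x - z‖) S v) : IsMinOn (fun z => ‖c • x - z‖) S (c • v) := by
  refine isMinOn_iff.2 fun z hz => ?_
  calc ‖c • x - c • v‖ = c * ‖x - v‖ := by rw [← smul_sub, norm_smul_of_nonneg hc.le]
    _ ≤ c * ‖x - c⁻¹ • z‖ := by gcongr; exact isMinOn_iff.1 h _ (hS z hz)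
    _ = ‖c • x - z‖ := by rw [← norm_smul_of_nonneg hc.le, smul_sub, smul_inv_smul₀ hc.ne']

end NormedNearestPoint

section InnerNearestPoint

variable {E : Type*} [NormedAddCommGroup E] [InnerProductSpace ℝ E] {S : Set E} {x v : E}

theorem IsMinOn.real_inner_sub_sub_nonpos (hS : Convex ℝ S) (hv : v ∈ S)
    (h : IsMinOn (fun z => ‖x - z‖) S v) : ∀ z ∈ S, ⟪x - v, z - v⟫ ≤ 0 :=
  (norm_eq_iInf_iff_real_inner_le_zero hS hv).mp (h.iInf_eq hv).symm

theorem IsMinOn.eq_of_norm_sub {u : E} (hS : Convex ℝ S) (hu : u ∈ S) (hv : v ∈ S)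
    (hu_min : IsMinOn (fun z => ‖x - z‖) S u) (hv_min : IsMinOn (fun z => ‖x - z‖) S v) :
    u = v := by
  have hvu : ⟪v - u, v - u⟫ ≤ 0 :=
    calc ⟪v - u, v - u⟫ = ⟪x - u, v - u⟫ + ⟪x - v, u - v⟫ := by
          rw [← neg_sub v u, inner_neg_right, ← sub_eq_add_neg, ← inner_sub_left,
            sub_sub_sub_cancel_left]
      _ ≤ 0 := add_nonpos (hu_min.real_inner_sub_sub_nonpos hS hu v hv)
                (hv_min.real_inner_sub_sub_nonpos hS hv u hu)
  exact (sub_eq_zero.mp (real_inner_self_nonpos.mp hvu)).symm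

theorem IsMinOn.norm_sub_of_forall_inner_eq_zero {a : E} (hv : v ∈ S)
    (h : IsMinOn (fun z => ‖a - z‖) S v) (horth : ∀ z ∈ S, ⟪x - a, a - z⟫ = 0) :
    IsMinOn (fun z => ‖x - z‖) S v := by
  have pythagoras : ∀ z ∈ S, ‖x - z‖ * ‖x - z‖ = ‖x - a‖ * ‖x - a‖ + ‖a - z‖ * ‖a - z‖ :=
    fun z hz => by
      rw [← sub_add_sub_cancel x a z]
      exact norm_add_sq_eq_norm_sq_add_norm_sq_real (horth z hz)
  refine isMinOn_iff.2 fun z hz => ?_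
  rw [mul_self_le_mul_self_iff (norm_nonneg _) (norm_nonneg _),
    pythagoras v hv, pythagoras z hz]
  have hle : ‖a - v‖ ≤ ‖a - z‖ := isMinOn_iff.1 h z hz
  gcongr

end InnerNearestPoint

section PolarCone

variable {E : Type*} [NormedAddCommGroup E] [InnerProductSpace ℝ E]

def polarCone (K : Set E) : Set E := {y | ∀ z ∈ K, ⟪y, z⟫ ≤ 0}

theorem convex_polarCone (K : Set E) : Convex ℝ (polarCone K) := by
  intro a ha b hb s t hs ht _ z hz
  rw [inner_add_left, real_inner_smul_left, real_inner_smul_left]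
  exact add_nonpos (mul_nonpos_of_nonneg_of_nonpos hs (ha z hz))
    (mul_nonpos_of_nonneg_of_nonpos ht (hb z hz))

theorem smul_mem_polarCone {K : Set E} {c : ℝ} {y : E} (hc : 0 ≤ c) (hy : y ∈ polarCone K) :
    c • y ∈ polarCone K := fun z hz => by
  rw [real_inner_smul_left]
  exact mul_nonpos_of_nonneg_of_nonpos hc (hy z hz)

theorem apply_mem_polarCone {K : Set E} {P : E →L[ℝ] E} (hPsa : ∀ x y : E, ⟪P x, y⟫ = ⟪x, P y⟫)
    (hPK : ∀ x ∈ K, P x ∈ K) {y : E} (hy : y ∈ polarCone K) : P y ∈ polarCone K :=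
  fun z hz => by rw [hPsa]; exact hy _ (hPK z hz)

end PolarCone

section Involution

variable {E : Type*} [NormedAddCommGroup E] [InnerProductSpace ℝ E] {P : E →L[ℝ] E}

theorem norm_apply_of_selfAdjoint_involutive (hPinv : ∀ x : E, P (P x) = x)
    (hPsa : ∀ x y : E, ⟪P x, y⟫ = ⟪x, P y⟫) (x : E) : ‖P x‖ = ‖x‖ := by
  have h : ⟪P x, P x⟫ = ⟪x, x⟫ := by rw [hPsa, hPinv]
  rw [real_inner_self_eq_norm_sq, real_inner_self_eq_norm_sq] at h
  exact (pow_left_inj₀ (norm_nonneg _) (norm_nonneg _) two_ne_zero).mp h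

theorem convex_setOf_apply_eq_self : Convex ℝ {x : E | P x = x} :=
  (LinearMap.eqLocus (P : E →ₗ[ℝ] E) LinearMap.id).convex

theorem real_inner_sub_half_add_apply_eq_zero (hPsa : ∀ x y : E, ⟪P x, y⟫ = ⟪x, P y⟫)
    (y : E) {u : E} (hu : P u = u) : ⟪y - (1 / 2 : ℝ) • (y + P y), u⟫ = 0 := by
  have hPy : ⟪P y, u⟫ = ⟪y, u⟫ := by rw [hPsa, hu]
  rw [inner_sub_left, real_inner_smul_left, inner_add_left, hPy]
  ring

end Involution

theorem projection_onto_M_general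
    {H : Type*} [NormedAddCommGroup H] [InnerProductSpace ℝ H]
    (P : H →L[ℝ] H) (hPinv : ∀ x : H, P (P x) = x)
    (hPsa : ∀ x y : H, ⟪P x, y⟫ = ⟪x, P y⟫)
    (K : Set H)
    (hPK : ∀ x ∈ K, P x ∈ K)
    (Kp : Set H) (hKp : Kp = {y : H | ∀ z ∈ K, ⟪y, z⟫ ≤ 0})
    (M : Set H) (hM : M = {lam ∈ Kp | P lam = lam})
    (PM PKp : H → H)
    (hPM : ∀ x : H, PM x ∈ M ∧ ∀ y ∈ M, ‖x - PM x‖ ≤ ‖x - y‖)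
    (hPKp : ∀ x : H, PKp x ∈ Kp ∧ ∀ y ∈ Kp, ‖x - PKp x‖ ≤ ‖x - y‖) :
    ∀ y : H, PM y = (1 / 2 : ℝ) • PKp (y + P y) := by
  change Kp = polarCone K at hKp
  subst hKp hM
  set M := {lam ∈ polarCone K | P lam = lam}
  intro y
  set w := y + P y
  have hPw : P w = w := by rw [map_add, hPinv, add_comm]
  obtain ⟨hq, hq_min⟩ := hPKp w
  replace hq_min : IsMinOn (fun z => ‖w - z‖) (polarCone K) (PKp w) := isMinOn_iff.2 hq_min
  have hPiso : Isometry P :=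
    AddMonoidHomClass.isometry_of_norm P (norm_apply_of_selfAdjoint_involutive hPinv hPsa)
  have hPq : P (PKp w) = PKp w := (hq_min.norm_sub_apply hPiso hPw).eq_of_norm_sub
    (convex_polarCone K) (apply_mem_polarCone hPsa hPK hq) hq hq_min
  have hm : (1 / 2 : ℝ) • PKp w ∈ M := ⟨smul_mem_polarCone (by norm_num) hq, by rw [map_smul, hPq]⟩
  have hm_min_half : IsMinOn (fun z => ‖(1 / 2 : ℝ) • w - z‖) (polarCone K) ((1 / 2 : ℝ) • PKp w) :=
    hq_min.norm_sub_smul (by norm_num) fun z hz => smul_mem_polarCone (by norm_num) hz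
  have hm_min : IsMinOn (fun z => ‖y - z‖) M ((1 / 2 : ℝ) • PKp w) :=
    (hm_min_half.on_subset (Set.sep_subset _ _)).norm_sub_of_forall_inner_eq_zero hm fun z hz =>
      real_inner_sub_half_add_apply_eq_zero hPsa y (by rw [map_sub, map_smul, hPw, hz.2])
  obtain ⟨hp, hp_min⟩ := hPM y
  exact (isMinOn_iff.2 hp_min).eq_of_norm_sub
    ((convex_polarCone K).inter convex_setOf_apply_eq_self) hp hm hm_min

/-- Let `P` be a self-adjoint continuous linear involution of a real Hilbert
space `H` (hence a linear isometry with `P² = I`), `K` a nonempty closed convex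
cone with `P(K) ⊆ K`, `K°` its polar cone, and `M = {λ ∈ K° : λ = Pλ}`. Then
the metric projection onto `M` satisfies `P_M y = (1/2) • P_{K°}((I + P) y)`. -/
theorem projection_onto_M
    {H : Type*} [NormedAddCommGroup H] [InnerProductSpace ℝ H] [CompleteSpace H]
    (P : H →L[ℝ] H) (hPinv : ∀ x : H, P (P x) = x)
    (hPsa : ∀ x y : H, ⟪P x, y⟫ = ⟪x, P y⟫)
    (K : Set H) (hKne : K.Nonempty) (hKcl : IsClosed K) (hKconv : Convex ℝ K)
    (hKcone : ∀ c : ℝ, 0 < c → ∀ x ∈ K, c • x ∈ K)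
    (hPK : ∀ x ∈ K, P x ∈ K)
    (Kp : Set H) (hKp : Kp = {y : H | ∀ z ∈ K, ⟪y, z⟫ ≤ 0})
    (M : Set H) (hM : M = {lam ∈ Kp | P lam = lam})
    (PM PKp : H → H)
    (hPM : ∀ x : H, PM x ∈ M ∧ ∀ y ∈ M, ‖x - PM x‖ ≤ ‖x - y‖)
    (hPKp : ∀ x : H, PKp x ∈ Kp ∧ ∀ y ∈ Kp, ‖x - PKp x‖ ≤ ‖x - y‖) :
    ∀ y : H, PM y = (1 / 2 : ℝ) • PKp (y + P y) :=
  projection_onto_M_general P hPinv hPsa K hPK Kp hKp M hM PM PKp hPM hPKp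
end

section
/- Let T₁, T₂ : H → 2^H be maximally monotone operators on a real Hilbert space, c > 0, and suppose T₁ is uniformly monotone with modulus φ and the composition T = R_{cT₂} ∘ R_{cT₁} has a fixed point z*. For the Peaceman–Rachford iteration x^{(k)} = J_{cT₁} z^{(k)}, z^{(k+1)} = (R_{cT₂} ∘ R_{cT₁}) z^{(k)}, started from any z^{(0)}, one has for every k: ‖z^{(k+1)} − z*‖² ≤ ‖z^{(k)} − z*‖² − 4c · φ(‖x^{(k)} − x*‖), where x* = J_{cT₁} z*; consequently φ(‖x^{(k)} − x*‖) → 0 and x^{(k)} → x* strongly. -/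
open scoped RealInnerProductSpace
open Filter Topology Set

/-!
Writing `a = J a + c u` with `u ∈ T (J a)`, the reflection `2 J a - a` equals `J a - c u`, so
`‖R a - R b‖² = ‖a - b‖² - 4c ⟪u - v, J a - J b⟫`. Monotonicity of `T₂` makes `R₂` nonexpansive
and uniform monotonicity of `T₁` makes `R₁` lose at least `4c φ(‖J₁ a - J₁ b‖)`; composing at the
fixed point gives the descent inequality. Telescoping makes `φ(‖x⁽ᵏ⁾ - x*‖)` summable, hence
null, and since `φ` is increasing and vanishes only at `0`, `‖x⁽ᵏ⁾ - x*‖ → 0`.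
-/

section Reflection

variable {H : Type*} [NormedAddCommGroup H] [InnerProductSpace ℝ H]

lemma norm_two_smul_sub_sub_sq (c : ℝ) {a b p q u v : H} (ha : a = p + c • u)
    (hb : b = q + c • v) :
    ‖((2 : ℝ) • p - a) - ((2 : ℝ) • q - b)‖ ^ 2 = ‖a - b‖ ^ 2 - 4 * c * ⟪u - v, p - q⟫ := by
  have hR : ((2 : ℝ) • p - a) - ((2 : ℝ) • q - b) = (p - q) - c • (u - v) := by
    rw [ha, hb]; module
  have hab : a - b = (p - q) + c • (u - v) := by rw [ha, hb]; module
  rw [hR, hab, norm_sub_sq_real, norm_add_sq_real, real_inner_smul_right,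
    real_inner_comm (p - q)]
  ring

/-- `ψ = 0` gives nonexpansiveness of the reflected resolvent of a monotone operator. -/
lemma sq_norm_reflection_sub_le {T : H → Set H} {c : ℝ} {J R : H → H} {ψ : ℝ → ℝ}
    (hc : 0 ≤ c) (hT : ∀ x y u v : H, u ∈ T x → v ∈ T y → ψ ‖x - y‖ ≤ ⟪u - v, x - y⟫)
    (hJ : ∀ z : H, ∃ u ∈ T (J z), z = J z + c • u)
    (hR : ∀ z : H, R z = (2 : ℝ) • J z - z) (a b : H) :
    ‖R a - R b‖ ^ 2 ≤ ‖a - b‖ ^ 2 - 4 * c * ψ ‖J a - J b‖ := by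
  obtain ⟨u, hu, hau⟩ := hJ a
  obtain ⟨v, hv, hbv⟩ := hJ b
  rw [hR, hR, norm_two_smul_sub_sub_sq c hau hbv]
  have := mul_le_mul_of_nonneg_left (hT _ _ _ _ hu hv) (by positivity : (0 : ℝ) ≤ 4 * c)
  linarith

end Reflection

lemma summable_of_le_sub_succ {a d : ℕ → ℝ} (ha : ∀ n, 0 ≤ a n) (hd : ∀ n, 0 ≤ d n)
    (h : ∀ n, a (n + 1) ≤ a n - d n) : Summable d := by
  have htel : ∀ n, ∑ k ∈ Finset.range n, d k ≤ a 0 - a n := by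
    intro n
    induction n with
    | zero => simp
    | succ n ih => rw [Finset.sum_range_succ]; linarith [h n]
  exact summable_of_sum_range_le hd fun n => (htel n).trans (sub_le_self _ (ha n))

lemma tendsto_zero_of_tendsto_monotoneOn_comp {ι : Type*} {l : Filter ι} {φ : ℝ → ℝ}
    (hφ : MonotoneOn φ (Ici 0)) (hpos : ∀ t, 0 < t → 0 < φ t) {s : ι → ℝ}
    (hs : ∀ i, 0 ≤ s i) (h : Tendsto (fun i => φ (s i)) l (𝓝 0)) :
    Tendsto s l (𝓝 0) := by
  refine tendsto_order.2 ⟨fun a ha => Eventually.of_forall fun i => ha.trans_le (hs i),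
    fun ε hε => ?_⟩
  filter_upwards [h.eventually (gt_mem_nhds (hpos ε hε))] with i hi
  exact lt_of_not_ge fun hle => (hφ hε.le (hs i) hle).not_gt hi

theorem peaceman_rachford_convergence_general
    {H : Type*} [NormedAddCommGroup H] [InnerProductSpace ℝ H]
    (T₁ T₂ : H → Set H)
    (hmono₂ : ∀ x y u v : H, u ∈ T₂ x → v ∈ T₂ y → 0 ≤ ⟪u - v, x - y⟫)
    (c : ℝ) (hc : 0 < c)
    (φ : ℝ → ℝ)
    (hφmono : MonotoneOn φ (Set.Ici (0 : ℝ)))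
    (hφnonneg : ∀ t : ℝ, 0 ≤ t → 0 ≤ φ t)
    (hφzero : ∀ t : ℝ, 0 ≤ t → (φ t = 0 ↔ t = 0))
    (hunif : ∀ x y u v : H, u ∈ T₁ x → v ∈ T₁ y → φ ‖x - y‖ ≤ ⟪u - v, x - y⟫)
    (J₁ J₂ : H → H)
    (hJ₁ : ∀ z : H, ∃ u ∈ T₁ (J₁ z), z = J₁ z + c • u)
    (hJ₂ : ∀ z : H, ∃ u ∈ T₂ (J₂ z), z = J₂ z + c • u)
    (R₁ R₂ : H → H)
    (hR₁ : ∀ z : H, R₁ z = (2 : ℝ) • J₁ z - z)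
    (hR₂ : ∀ z : H, R₂ z = (2 : ℝ) • J₂ z - z)
    (zstar : H) (hfix : R₂ (R₁ zstar) = zstar)
    (z : ℕ → H) (x : ℕ → H) (xstar : H)
    (hz : ∀ k : ℕ, z (k + 1) = R₂ (R₁ (z k)))
    (hx : ∀ k : ℕ, x k = J₁ (z k)) (hxstar : xstar = J₁ zstar) :
    (∀ k : ℕ, ‖z (k + 1) - zstar‖ ^ 2
        ≤ ‖z k - zstar‖ ^ 2 - 4 * c * φ ‖x k - xstar‖) ∧
    Filter.Tendsto (fun k => φ ‖x k - xstar‖) Filter.atTop (nhds 0) ∧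
    Filter.Tendsto x Filter.atTop (nhds xstar) := by
  have descent : ∀ k, ‖z (k + 1) - zstar‖ ^ 2
      ≤ ‖z k - zstar‖ ^ 2 - 4 * c * φ ‖x k - xstar‖ := fun k =>
    calc ‖z (k + 1) - zstar‖ ^ 2 = ‖R₂ (R₁ (z k)) - R₂ (R₁ zstar)‖ ^ 2 := by rw [hz, hfix]
      _ ≤ ‖R₁ (z k) - R₁ zstar‖ ^ 2 - 4 * c * 0 :=
        sq_norm_reflection_sub_le (ψ := fun _ => 0) hc.le hmono₂ hJ₂ hR₂ _ _
      _ ≤ ‖z k - zstar‖ ^ 2 - 4 * c * φ ‖x k - xstar‖ := by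
        simpa [hx, hxstar] using sq_norm_reflection_sub_le hc.le hunif hJ₁ hR₁ (z k) zstar
  have hφx : ∀ k, 0 ≤ φ ‖x k - xstar‖ := fun k => hφnonneg _ (norm_nonneg _)
  have hφ_tendsto : Tendsto (fun k => φ ‖x k - xstar‖) atTop (𝓝 0) := by
    have hsum := summable_of_le_sub_succ (fun k => sq_nonneg ‖z k - zstar‖)
      (fun k => mul_nonneg (by positivity) (hφx k)) descent
    simpa only [inv_mul_cancel_left₀ (by positivity : (4 * c) ≠ 0), mul_zero] using
      hsum.tendsto_atTop_zero.const_mul (4 * c)⁻¹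
  have hpos : ∀ t, 0 < t → 0 < φ t := fun t ht =>
    (hφnonneg t ht.le).lt_of_ne fun h => ht.ne' ((hφzero t ht.le).1 h.symm)
  refine ⟨descent, hφ_tendsto, tendsto_iff_norm_sub_tendsto_zero.2 ?_⟩
  exact tendsto_zero_of_tendsto_monotoneOn_comp hφmono hpos (fun k => norm_nonneg _) hφ_tendsto

/-- Peaceman–Rachford splitting: if `T₁, T₂` are maximally monotone, `c > 0`,
`T₁` is uniformly monotone with modulus `φ`, and `z*` is a fixed point of
`R_{cT₂} ∘ R_{cT₁}` (where `J_i` is the resolvent of `c T_i` and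
`R_i = 2 J_i - I`), then the iteration `x⁽ᵏ⁾ = J₁ z⁽ᵏ⁾`,
`z⁽ᵏ⁺¹⁾ = (R₂ ∘ R₁) z⁽ᵏ⁾` satisfies
`‖z⁽ᵏ⁺¹⁾ − z*‖² ≤ ‖z⁽ᵏ⁾ − z*‖² − 4c·φ(‖x⁽ᵏ⁾ − x*‖)` with `x* = J₁ z*`, hence
`φ(‖x⁽ᵏ⁾ − x*‖) → 0` and `x⁽ᵏ⁾ → x*` strongly. -/
theorem peaceman_rachford_convergence
    {H : Type*} [NormedAddCommGroup H] [InnerProductSpace ℝ H]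
    (T₁ T₂ : H → Set H)
    (hmono₁ : ∀ x y u v : H, u ∈ T₁ x → v ∈ T₁ y → 0 ≤ ⟪u - v, x - y⟫)
    (hmax₁ : ∀ x u : H, (∀ y v : H, v ∈ T₁ y → 0 ≤ ⟪u - v, x - y⟫) → u ∈ T₁ x)
    (hmono₂ : ∀ x y u v : H, u ∈ T₂ x → v ∈ T₂ y → 0 ≤ ⟪u - v, x - y⟫)
    (hmax₂ : ∀ x u : H, (∀ y v : H, v ∈ T₂ y → 0 ≤ ⟪u - v, x - y⟫) → u ∈ T₂ x)
    (c : ℝ) (hc : 0 < c)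
    (φ : ℝ → ℝ)
    (hφmono : MonotoneOn φ (Set.Ici (0 : ℝ)))
    (hφnonneg : ∀ t : ℝ, 0 ≤ t → 0 ≤ φ t)
    (hφzero : ∀ t : ℝ, 0 ≤ t → (φ t = 0 ↔ t = 0))
    (hunif : ∀ x y u v : H, u ∈ T₁ x → v ∈ T₁ y → φ ‖x - y‖ ≤ ⟪u - v, x - y⟫)
    (J₁ J₂ : H → H)
    (hJ₁ : ∀ z : H, ∃ u ∈ T₁ (J₁ z), z = J₁ z + c • u)
    (hJ₂ : ∀ z : H, ∃ u ∈ T₂ (J₂ z), z = J₂ z + c • u)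
    (R₁ R₂ : H → H)
    (hR₁ : ∀ z : H, R₁ z = (2 : ℝ) • J₁ z - z)
    (hR₂ : ∀ z : H, R₂ z = (2 : ℝ) • J₂ z - z)
    (zstar : H) (hfix : R₂ (R₁ zstar) = zstar)
    (z : ℕ → H) (x : ℕ → H) (xstar : H)
    (hz : ∀ k : ℕ, z (k + 1) = R₂ (R₁ (z k)))
    (hx : ∀ k : ℕ, x k = J₁ (z k)) (hxstar : xstar = J₁ zstar) :
    (∀ k : ℕ, ‖z (k + 1) - zstar‖ ^ 2
        ≤ ‖z k - zstar‖ ^ 2 - 4 * c * φ ‖x k - xstar‖) ∧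
    Filter.Tendsto (fun k => φ ‖x k - xstar‖) Filter.atTop (nhds 0) ∧
    Filter.Tendsto x Filter.atTop (nhds xstar) :=
  peaceman_rachford_convergence_general T₁ T₂ hmono₂ c hc φ hφmono hφnonneg hφzero hunif J₁ J₂ hJ₁
    hJ₂ R₁ R₂ hR₁ hR₂ zstar hfix z x xstar hz hx hxstar
end

section
/- Let f ∈ Γ₀(H), let C : H → G be continuous linear, d ∈ G, c > 0, and z ∈ G. Suppose u minimizes x ↦ f(x) + ⟨z, Cx⟩ + (c/2)‖Cx − d‖² over H. Then λ = z + c(Cu − d) satisfies z − λ ∈ c T₁λ, i.e., λ = J_{cT₁} z, where T₁λ = −C ∂f*(−C*λ) + d. In particular the resolvent of T₁ at z can be evaluated via this primal minimization. -/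
/-! Differentiating the objective along the segment from `u` to any `y` and using the convexity of
`f` gives the optimality condition `−C*λ ∈ ∂f(u)`, because the gradient of
`x ↦ ⟪z, Cx⟫ + (c/2)‖Cx − d‖²` at `u` is `C*(z + c(Cu − d)) = C*λ`. The Fenchel–Young equality
`f(u) + f*(p) = ⟪p, u⟫` for `p ∈ ∂f(u)` inverts this to `u ∈ ∂f*(−C*λ)`, and
`z − λ = c(−Cu + d)` is the definition of `λ`. -/

open scoped RealInnerProductSpace

/-- The Fenchel conjugate of an extended-real-valued function on a real
inner-product space: `f*(y) = sup_x (⟪y, x⟫ − f(x))`. -/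
noncomputable def fenchelConjugate {H : Type*} [NormedAddCommGroup H]
    [InnerProductSpace ℝ H] (f : H → EReal) : H → EReal :=
  fun y => ⨆ x : H, (((⟪y, x⟫ : ℝ) : EReal) - f x)

/-- The subdifferential of an extended-real-valued function. -/
def subdiff {H : Type*} [NormedAddCommGroup H] [InnerProductSpace ℝ H]
    (g : H → EReal) (x : H) : Set H :=
  {u : H | ∀ y : H, g x + ((⟪u, y - x⟫ : ℝ) : EReal) ≤ g y}

open Filter Set

lemma le_of_hasDerivAt_of_forall_mul_le_sub {φ : ℝ → ℝ} {φ' a : ℝ} (hφ : HasDerivAt φ φ' 0)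
    (h : ∀ t ∈ Ioo (0 : ℝ) 1, t * a ≤ φ t - φ 0) : a ≤ φ' := by
  refine ge_of_tendsto hφ.tendsto_slope_zero_right ?_
  filter_upwards [Ioo_mem_nhdsGT one_pos] with t ht
  rw [zero_add, smul_eq_mul, le_inv_mul_iff₀ ht.1]
  exact h t ht

lemma ne_top_of_add_le_add {α : Type*} {f : α → EReal} {g : α → ℝ} {u x : α} (hx : f x ≠ ⊤)
    (hmin : f u + (g u : EReal) ≤ f x + g x) : f u ≠ ⊤ := by
  intro hu
  rw [hu, EReal.top_add_of_ne_bot (EReal.coe_ne_bot _), top_le_iff] at hmin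
  lift f x to ℝ using ⟨hx, fun h ↦ by simp [h] at hmin⟩ with s
  exact EReal.coe_ne_top _ (by exact_mod_cast hmin)

section

variable {H : Type*} [NormedAddCommGroup H] [InnerProductSpace ℝ H]

lemma neg_mem_subdiff_of_forall_add_le_add {f : H → EReal}
    (hconv : ∀ x y : H, ∀ a b : ℝ, 0 ≤ a → 0 ≤ b → a + b = 1 →
      f (a • x + b • y) ≤ (a : EReal) * f x + (b : EReal) * f y)
    {g : H → ℝ} {u p : H} (hg : HasFDerivAt g (innerSL ℝ p) u) (hfu : f u ≠ ⊤) (hfu' : f u ≠ ⊥)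
    (hmin : ∀ x, f u + (g u : EReal) ≤ f x + g x) : -p ∈ subdiff f u := by
  intro y
  lift f u to ℝ using ⟨hfu, hfu'⟩ with r hr
  induction hy : f y using EReal.rec with
  | top => exact le_top
  | bot => simpa [hy, ← EReal.coe_add] using hmin y
  | coe s =>
    have hline : HasDerivAt (fun t : ℝ ↦ g (u + t • (y - u))) ⟪p, y - u⟫ 0 := by
      refine hg.comp_hasDerivAt_of_eq (0 : ℝ) ?_ (by simp)
      simpa using ((hasDerivAt_id (0 : ℝ)).smul_const (y - u)).const_add u
    have hdesc : ∀ t ∈ Ioo (0 : ℝ) 1, t * (r - s) ≤ g (u + t • (y - u)) - g u := by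
      intro t ht
      have hcv := hconv u y (1 - t) t (by linarith [ht.2]) ht.1.le (by ring)
      rw [← hr, hy, show (1 - t) • u + t • y = u + t • (y - u) by module] at hcv
      have := (hmin (u + t • (y - u))).trans (add_le_add_left hcv _)
      norm_cast at this
      linarith
    have := le_of_hasDerivAt_of_forall_mul_le_sub hline (by simpa using hdesc)
    norm_cast
    rw [inner_neg_left]
    linarith

lemma fenchelConjugate_le_of_mem_subdiff {f : H → EReal} {u p : H} {r : ℝ} (hr : f u = r)
    (hp : p ∈ subdiff f u) : fenchelConjugate f p ≤ ((⟪p, u⟫ - r : ℝ) : EReal) := by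
  refine iSup_le fun x ↦ ?_
  have hx := hp x
  rw [hr] at hx
  induction hfx : f x using EReal.rec with
  | top => simp
  | bot => simp [hfx, ← EReal.coe_add] at hx
  | coe s =>
    rw [hfx] at hx
    norm_cast at hx ⊢
    rw [inner_sub_right] at hx
    linarith

lemma mem_subdiff_fenchelConjugate {f : H → EReal} {u p : H} (hfu : f u ≠ ⊤) (hfu' : f u ≠ ⊥)
    (hp : p ∈ subdiff f u) : u ∈ subdiff (fenchelConjugate f) p := by
  intro q
  lift f u to ℝ using ⟨hfu, hfu'⟩ with r hr
  have hq : ((⟪q, u⟫ - r : ℝ) : EReal) ≤ fenchelConjugate f q :=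
    le_iSup_of_le u (by rw [← hr]; rfl)
  refine (add_le_add_left (fenchelConjugate_le_of_mem_subdiff hr.symm hp) _).trans
    (le_of_eq_of_le ?_ hq)
  norm_cast
  rw [inner_sub_right, real_inner_comm u q, real_inner_comm u p]
  ring

end

section

variable {H G : Type*} [NormedAddCommGroup H] [InnerProductSpace ℝ H] [CompleteSpace H]
  [NormedAddCommGroup G] [InnerProductSpace ℝ G] [CompleteSpace G]

lemma hasFDerivAt_inner_add_half_mul_norm_sub_sq (C : H →L[ℝ] G) (z d : G) (c : ℝ) (u : H) :
    HasFDerivAt (fun x ↦ ⟪z, C x⟫ + c / 2 * ‖C x - d‖ ^ 2)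
      (innerSL ℝ (ContinuousLinearMap.adjoint C (z + c • (C u - d)))) u := by
  have hlin := ((innerSL ℝ z).comp C).hasFDerivAt (x := u)
  have hsq := ((C.hasFDerivAt (x := u)).sub_const d).norm_sq.const_mul (c / 2)
  refine (hlin.add hsq).congr_fderiv (ContinuousLinearMap.ext fun v ↦ ?_)
  simp [ContinuousLinearMap.adjoint_inner_left]
  ring

end

theorem resolvent_via_primal_minimization_general
    {H G : Type*} [NormedAddCommGroup H] [InnerProductSpace ℝ H] [CompleteSpace H]
    [NormedAddCommGroup G] [InnerProductSpace ℝ G] [CompleteSpace G]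
    (f : H → EReal)
    (hproper_top : ∃ x : H, f x ≠ ⊤) (hproper_bot : ∀ x : H, f x ≠ ⊥)
    (hconv : ∀ x y : H, ∀ a b : ℝ, 0 ≤ a → 0 ≤ b → a + b = 1 →
      f (a • x + b • y) ≤ (a : EReal) * f x + (b : EReal) * f y)
    (C : H →L[ℝ] G) (d : G) (c : ℝ) (z : G)
    (u : H)
    (hmin : ∀ x : H,
      f u + ((⟪z, C u⟫ + c / 2 * ‖C u - d‖ ^ 2 : ℝ) : EReal) ≤
      f x + ((⟪z, C x⟫ + c / 2 * ‖C x - d‖ ^ 2 : ℝ) : EReal))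
    (lam : G) (hlam : lam = z + c • (C u - d)) :
    ∃ p ∈ subdiff (fenchelConjugate f) (-(ContinuousLinearMap.adjoint C lam)),
      z - lam = c • (-(C p) + d) := by
  obtain ⟨x₀, hx₀⟩ := hproper_top
  have hfu : f u ≠ ⊤ :=
    ne_top_of_add_le_add (g := fun x ↦ ⟪z, C x⟫ + c / 2 * ‖C x - d‖ ^ 2) hx₀ (hmin x₀)
  have hsubgrad : -(ContinuousLinearMap.adjoint C lam) ∈ subdiff f u := by
    subst hlam
    exact neg_mem_subdiff_of_forall_add_le_add hconv
      (hasFDerivAt_inner_add_half_mul_norm_sub_sq C z d c u) hfu (hproper_bot u) hmin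
  refine ⟨u, mem_subdiff_fenchelConjugate hfu (hproper_bot u) hsubgrad, ?_⟩
  rw [hlam]
  module

/-- Resolvent of `T₁λ = −C∂f*(−C*λ) + d` via primal minimization: if `u`
minimizes `x ↦ f(x) + ⟪z, Cx⟫ + (c/2)‖Cx − d‖²`, then `λ = z + c(Cu − d)`
satisfies `z − λ ∈ cT₁λ`, i.e. `λ = J_{cT₁} z`. -/
theorem resolvent_via_primal_minimization
    {H G : Type*} [NormedAddCommGroup H] [InnerProductSpace ℝ H] [CompleteSpace H]
    [NormedAddCommGroup G] [InnerProductSpace ℝ G] [CompleteSpace G]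
    (f : H → EReal)
    (hproper_top : ∃ x : H, f x ≠ ⊤) (hproper_bot : ∀ x : H, f x ≠ ⊥)
    (hconv : ∀ x y : H, ∀ a b : ℝ, 0 ≤ a → 0 ≤ b → a + b = 1 →
      f (a • x + b • y) ≤ (a : EReal) * f x + (b : EReal) * f y)
    (hlsc : LowerSemicontinuous f)
    (C : H →L[ℝ] G) (d : G) (c : ℝ) (hc : 0 < c) (z : G)
    (u : H)
    (hmin : ∀ x : H,
      f u + ((⟪z, C u⟫ + c / 2 * ‖C u - d‖ ^ 2 : ℝ) : EReal) ≤
      f x + ((⟪z, C x⟫ + c / 2 * ‖C x - d‖ ^ 2 : ℝ) : EReal))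
    (lam : G) (hlam : lam = z + c • (C u - d)) :
    ∃ p ∈ subdiff (fenchelConjugate f) (-(ContinuousLinearMap.adjoint C lam)),
      z - lam = c • (-(C p) + d) :=
  resolvent_via_primal_minimization_general f hproper_top hproper_bot hconv C d c z u hmin lam hlam
end
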